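/- Let T be a positively edge-weighted phylogenetic X-tree with |X| = n, let 2 ≤ m ≤ n, let D be the m-subtree weight map of T, and let S_D(i,j) = Σ D({i,j} ∪ Y), the sum over all (m−2)-element subsets Y of X \ {i,j}. Let (a1,a2;a3,a4) be four distinct leaves such that the path from a1 to a2 and the path from a3 to a4 are vertex-disjoint, and suppose every edge of the smallest subtree of T containing {a1,a2,a3,a4} belongs to T_{≤ n−m}. Then S_D(a1,a2) + S_D(a3,a4) < S_D(a1,a3) + S_D(a2,a4). -/

import Mathlib

/-!
Writing `S_D(i,j)` as a sum of `D(R)` over the `m`-sets `R ⊇ {i,j}`, the sets `R` that contain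
three or all four of the `a_k` cancel in `S_D(a1,a3) + S_D(a2,a4) - S_D(a1,a2) - S_D(a3,a4)`, which
becomes a sum over `Z ⊆ X \ {a1,a2,a3,a4}` with `|Z| = m - 2` of
`D(a1a3Z) + D(a2a4Z) - D(a1a2Z) - D(a3a4Z)`.
An edge lies in `[R]` exactly when `R` meets both components of `T - e`; since no edge separates
both `a1` from `a2` and `a3` from `a4`, edgewise `[a1a2Z] ∪ [a3a4Z] ⊆ [a1a3Z] ∪ [a2a4Z]` and
`[a1a2Z] ∩ [a3a4Z] ⊆ [a1a3Z] ∩ [a2a4Z]`, so every summand is nonnegative. The edge `e` of the path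
from `a1` to `a3` that lies on neither quartet path separates `{a1,a2}` from `{a3,a4}`; as
`e ∈ T_{≤ n-m}`, one side of `e` carries at least `m` leaves, and taking `Z` to be `m - 2` of them
makes `e` count in `[a1a3Z] ∩ [a2a4Z]` but not in `[a1a2Z] ∩ [a3a4Z]`, so that summand is positive.
-/

open SimpleGraph Finset

attribute [local instance] Classical.propDecidable

noncomputable section

/-- `e` lies on some path (hence on the unique path, in a tree) from `a` to `b`. -/
def OnPath {V : Type*} (G : SimpleGraph V) (a b : V) (e : Sym2 V) : Prop :=
  ∃ p : G.Walk a b, p.IsPath ∧ e ∈ p.edges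

/-- The edge set `[R]` of the smallest subtree of a tree `G` spanning `R`. -/
def subtreeEdges {V : Type*} [Fintype V] (G : SimpleGraph V) (R : Finset V) :
    Finset (Sym2 V) :=
  G.edgeFinset.filter fun e => ∃ a ∈ R, ∃ b ∈ R, OnPath G a b e

/-- The subtree weight `D(R) = ∑_{e ∈ [R]} w(e)`. -/
def subtreeWeight {V : Type*} [Fintype V] (G : SimpleGraph V) (w : Sym2 V → ℝ)
    (R : Finset V) : ℝ :=
  ∑ e ∈ subtreeEdges G R, w e

/-- `L_i(e)`: the set of leaves in the component of `T - e` containing `i`. -/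
def leafSide {V : Type*} [Fintype V] (G : SimpleGraph V) (X : Finset V)
    (i : V) (e : Sym2 V) : Finset V :=
  X.filter fun x => (G.deleteEdges {e}).Reachable i x

/-- `S_D(i,j) = ∑_{Y ∈ C(X \ {i,j}, m-2)} D({i,j} ∪ Y)`. -/
def SDmap {V : Type*} [Fintype V] (G : SimpleGraph V) (w : Sym2 V → ℝ)
    (X : Finset V) (m : ℕ) (i j : V) : ℝ :=
  ∑ Y ∈ ((X.erase i).erase j).powersetCard (m - 2),
    subtreeWeight G w (insert i (insert j Y))

/-- Binomial coefficient with integer arguments, `0` whenever `b < 0` or `a < b`. -/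
def C (a b : ℤ) : ℤ := if 0 ≤ b ∧ b ≤ a then (a.toNat.choose b.toNat : ℤ) else 0

/-- `(i,j;k,l)` is a tree quartet: the (unique) path from `i` to `j` and the (unique) path
from `k` to `l` share no edges. -/
def IsQuartet {V : Type*} (G : SimpleGraph V) (i j k l : V) : Prop :=
  ∀ (p : G.Walk i j) (q : G.Walk k l), p.IsPath → q.IsPath →
    ∀ e ∈ p.edges, e ∉ q.edges

namespace Finset

variable {ι α M : Type*}

theorem sum_add_sum_le_sum_add_sum [DecidableEq ι] {A B C D : Finset ι} {f : ι → ℝ}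
    (hU : A ∪ B ⊆ C ∪ D) (hI : A ∩ B ⊆ C ∩ D) (hf : ∀ i ∈ C ∪ D, 0 ≤ f i) :
    ∑ i ∈ A, f i + ∑ i ∈ B, f i ≤ ∑ i ∈ C, f i + ∑ i ∈ D, f i := by
  rw [← sum_union_inter (s₁ := A), ← sum_union_inter (s₁ := C)]
  exact add_le_add (sum_le_sum_of_subset_of_nonneg hU fun i hi _ => hf i hi)
    (sum_le_sum_of_subset_of_nonneg hI fun i hi _ => hf i (inter_subset_union hi))

theorem sum_add_sum_lt_sum_add_sum [DecidableEq ι] {A B C D : Finset ι} {f : ι → ℝ}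
    (hU : A ∪ B ⊆ C ∪ D) (hI : A ∩ B ⊆ C ∩ D) (hf : ∀ i ∈ C ∪ D, 0 ≤ f i)
    {j : ι} (hjCD : j ∈ C ∩ D) (hjAB : j ∉ A ∩ B) (hj : 0 < f j) :
    ∑ i ∈ A, f i + ∑ i ∈ B, f i < ∑ i ∈ C, f i + ∑ i ∈ D, f i := by
  rw [← sum_union_inter (s₁ := A), ← sum_union_inter (s₁ := C)]
  exact add_lt_add_of_le_of_lt (sum_le_sum_of_subset_of_nonneg hU fun i hi _ => hf i hi)
    (sum_lt_sum_of_subset hI hjCD hjAB hj fun i hi _ => hf i (inter_subset_union hi))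

/-- The filter condition says `R ∩ Q = {i, j}`, in a form that `simp` unfolds for explicit `Q`. -/
theorem sum_powersetCard_sdiff_eq_sum_filter [DecidableEq α] [AddCommMonoid M] (F : Finset α → M)
    {X Q : Finset α} {i j : α} (hi : i ∈ X) (hj : j ∈ X) (hiQ : i ∈ Q) (hjQ : j ∈ Q)
    (hij : i ≠ j) (k : ℕ) :
    ∑ Z ∈ (X \ Q).powersetCard k, F (insert i (insert j Z)) =
      ∑ R ∈ (X.powersetCard (k + 2)).filter (fun R => ∀ q ∈ Q, q ∈ R ↔ q = i ∨ q = j), F R := by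
  refine sum_nbij' (fun Z => insert i (insert j Z)) (fun R => R \ Q) ?_ ?_ ?_ ?_
    (fun _ _ => rfl)
  · intro Z hZ
    simp only [mem_filter, mem_powersetCard, subset_iff, mem_sdiff] at hZ ⊢
    obtain ⟨hZX, rfl⟩ := hZ
    have hiZ : i ∉ Z := fun h => (hZX h).2 hiQ
    have hjZ : j ∉ Z := fun h => (hZX h).2 hjQ
    refine ⟨⟨by grind, ?_⟩, by grind⟩
    rw [card_insert_of_notMem (by grind), card_insert_of_notMem hjZ]
  · intro R hR
    simp only [mem_filter, mem_powersetCard] at hR ⊢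
    obtain ⟨⟨hRX, hcard⟩, hRQ⟩ := hR
    have hRQ' : R ∩ Q = {i, j} := by ext x; grind
    refine ⟨sdiff_subset_sdiff hRX le_rfl, ?_⟩
    rw [card_sdiff, inter_comm, hRQ', card_pair hij, hcard, Nat.add_sub_cancel]
  · intro Z hZ
    simp only [mem_powersetCard, subset_iff, mem_sdiff] at hZ
    ext x; grind
  · intro R hR
    simp only [mem_filter] at hR
    ext x; grind

theorem exists_mem_powersetCard_sdiff_forall [DecidableEq α] {P : α → Prop}
    [DecidablePred P] {X : Finset α} {m : ℕ} {a1 a2 a3 a4 : α} (hm : m ≤ #(X.filter P))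
    (h12 : P a1 ↔ P a2) (h34 : P a3 ↔ P a4) (h13 : ¬ (P a1 ↔ P a3)) :
    ∃ Z ∈ (X \ {a1, a2, a3, a4}).powersetCard (m - 2), ∀ z ∈ Z, P z := by
  have hQ : #({a1, a2, a3, a4} ∩ X.filter P) ≤ 2 := by
    by_cases ha : P a1
    · refine (card_le_card fun x hx => ?_).trans (card_le_two (a := a1) (b := a2))
      simp only [mem_inter, mem_filter, mem_insert, mem_singleton] at hx ⊢
      grind
    · refine (card_le_card fun x hx => ?_).trans (card_le_two (a := a3) (b := a4))
      simp only [mem_inter, mem_filter, mem_insert, mem_singleton] at hx ⊢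
      grind
  obtain ⟨Z, hZ, hcard⟩ := exists_subset_card_eq (s := X.filter P \ {a1, a2, a3, a4})
    (n := m - 2) (by rw [card_sdiff]; omega)
  refine ⟨Z, mem_powersetCard.mpr ⟨fun z hz => ?_, hcard⟩, fun z hz => ?_⟩
  · have := hZ hz
    simp only [mem_sdiff, mem_filter] at this ⊢
    exact ⟨this.1.1, this.2⟩
  · exact (mem_filter.mp (mem_sdiff.mp (hZ hz)).1).2

end Finset

section PairSum

variable {α M : Type*} [DecidableEq α] [AddCommGroup M]

def pairSum (F : Finset α → M) (X : Finset α) (k : ℕ) (i j : α) : M :=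
  ∑ Y ∈ ((X.erase i).erase j).powersetCard k, F (insert i (insert j Y))

theorem pairSum_eq_sum_filter (F : Finset α → M) {X : Finset α} {i j : α} (hi : i ∈ X)
    (hj : j ∈ X) (hij : i ≠ j) (k : ℕ) :
    pairSum F X k i j = ∑ R ∈ (X.powersetCard (k + 2)).filter
      (fun R => ∀ q ∈ ({i, j} : Finset α), q ∈ R ↔ q = i ∨ q = j), F R := by
  have hX : (X.erase i).erase j = X \ {i, j} := by
    ext x; simp only [mem_erase, mem_sdiff, mem_insert, mem_singleton]; tauto
  rw [pairSum, hX]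
  exact sum_powersetCard_sdiff_eq_sum_filter F hi hj (by simp) (by simp) hij k

theorem pairSum_quartet (F : Finset α → M) {X : Finset α} {a1 a2 a3 a4 : α}
    (h1 : a1 ∈ X) (h2 : a2 ∈ X) (h3 : a3 ∈ X) (h4 : a4 ∈ X)
    (h12 : a1 ≠ a2) (h13 : a1 ≠ a3) (h14 : a1 ≠ a4)
    (h23 : a2 ≠ a3) (h24 : a2 ≠ a4) (h34 : a3 ≠ a4) (k : ℕ) :
    pairSum F X k a1 a3 + pairSum F X k a2 a4 - pairSum F X k a1 a2 - pairSum F X k a3 a4 =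
      ∑ Z ∈ (X \ {a1, a2, a3, a4}).powersetCard k,
        (F (insert a1 (insert a3 Z)) + F (insert a2 (insert a4 Z))
          - F (insert a1 (insert a2 Z)) - F (insert a3 (insert a4 Z))) := by
  rw [pairSum_eq_sum_filter F h1 h3 h13, pairSum_eq_sum_filter F h2 h4 h24,
    pairSum_eq_sum_filter F h1 h2 h12, pairSum_eq_sum_filter F h3 h4 h34,
    sum_sub_distrib, sum_sub_distrib, sum_add_distrib,
    sum_powersetCard_sdiff_eq_sum_filter F h1 h3 (by simp) (by simp) h13,
    sum_powersetCard_sdiff_eq_sum_filter F h2 h4 (by simp) (by simp) h24,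
    sum_powersetCard_sdiff_eq_sum_filter F h1 h2 (by simp) (by simp) h12,
    sum_powersetCard_sdiff_eq_sum_filter F h3 h4 (by simp) (by simp) h34]
  simp only [sum_filter, ← sum_add_distrib, ← sum_sub_distrib]
  refine sum_congr rfl fun R _ => ?_
  simp only [forall_mem_insert, mem_singleton, forall_eq]
  by_cases b1 : a1 ∈ R <;> by_cases b2 : a2 ∈ R <;> by_cases b3 : a3 ∈ R <;>
    by_cases b4 : a4 ∈ R <;> simp [*, h12.symm, h13.symm, h14.symm, h23.symm, h24.symm, h34.symm]

end PairSum

section Separates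

variable {α : Type*} {P : α → Prop} {a b a1 a2 a3 a4 : α} {Z R : Finset α}

def Separates (P : α → Prop) (R : Finset α) : Prop :=
  (∃ a ∈ R, P a) ∧ ∃ b ∈ R, ¬ P b

theorem separates_iff_exists_not_iff :
    Separates P R ↔ ∃ a ∈ R, ∃ b ∈ R, ¬ (P a ↔ P b) := by
  constructor
  · rintro ⟨⟨a, ha, hPa⟩, b, hb, hPb⟩
    exact ⟨a, ha, b, hb, fun h => hPb (h.mp hPa)⟩
  · rintro ⟨a, ha, b, hb, hab⟩
    by_cases hPa : P a
    · exact ⟨⟨a, ha, hPa⟩, b, hb, fun hPb => hab (iff_of_true hPa hPb)⟩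
    · exact ⟨⟨b, hb, by tauto⟩, a, ha, hPa⟩

theorem separates_insert_insert_of_not_iff (h : ¬ (P a ↔ P b)) :
    Separates P (insert a (insert b Z)) :=
  separates_iff_exists_not_iff.mpr ⟨a, by simp, b, by simp, h⟩

theorem not_separates_of_forall (h : ∀ x ∈ R, P x) : ¬ Separates P R :=
  fun ⟨_, b, hb, hPb⟩ => hPb (h b hb)

theorem Separates.cross_of_or (hP : (P a1 ↔ P a2) ∨ (P a3 ↔ P a4))
    (h : Separates P (insert a1 (insert a2 Z)) ∨ Separates P (insert a3 (insert a4 Z))) :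
    Separates P (insert a1 (insert a3 Z)) ∨ Separates P (insert a2 (insert a4 Z)) := by
  simp only [Separates, exists_mem_insert] at *
  by_cases P a1 <;> by_cases P a2 <;> by_cases P a3 <;> by_cases P a4 <;> simp_all

theorem Separates.cross_of_and (hP : (P a1 ↔ P a2) ∨ (P a3 ↔ P a4))
    (h : Separates P (insert a1 (insert a2 Z)) ∧ Separates P (insert a3 (insert a4 Z))) :
    Separates P (insert a1 (insert a3 Z)) ∧ Separates P (insert a2 (insert a4 Z)) := by
  simp only [Separates, exists_mem_insert] at *
  by_cases P a1 <;> by_cases P a2 <;> by_cases P a3 <;> by_cases P a4 <;> simp_all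

theorem not_separates_and_of_forall (h12 : P a1 ↔ P a2) (h34 : P a3 ↔ P a4)
    (h13 : ¬ (P a1 ↔ P a3)) (hZ : ∀ z ∈ Z, P z) :
    ¬ (Separates P (insert a1 (insert a2 Z)) ∧ Separates P (insert a3 (insert a4 Z))) := by
  rintro ⟨h, h'⟩
  by_cases ha : P a1
  · exact not_separates_of_forall (by simp only [forall_mem_insert]; exact ⟨ha, h12.mp ha, hZ⟩) h
  · exact not_separates_of_forall
      (by simp only [forall_mem_insert]; exact ⟨by tauto, by tauto, hZ⟩) h'

end Separates

namespace SimpleGraph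

variable {V : Type*} {G : SimpleGraph V} {u v a1 a2 a3 a4 : V}

theorem Connected.reachable_deleteEdges_or (hG : G.Connected) (u v x : V) :
    (G.deleteEdges {s(u, v)}).Reachable u x ∨ (G.deleteEdges {s(u, v)}).Reachable v x := by
  by_cases hb : G.IsBridge s(u, v)
  · by_contra! h
    obtain ⟨p, hp⟩ := (hG.preconnected u x).exists_isPath
    exact hp.isTrail.not_mem_edges_of_not_reachable (isBridge_iff.mp hb) (fun h' => h.2 h'.symm)
      (p.mem_edges_of_not_reachable_deleteEdges h.1)
  · exact Or.inl ((hG.connected_delete_edge_of_not_isBridge hb).preconnected u x)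

theorem Connected.reachable_deleteEdges_iff (hG : G.Connected) (hb : G.IsBridge s(u, v))
    (a b : V) : (G.deleteEdges {s(u, v)}).Reachable a b ↔
      ((G.deleteEdges {s(u, v)}).Reachable u a ↔ (G.deleteEdges {s(u, v)}).Reachable u b) := by
  refine ⟨fun h => ⟨fun ha => ha.trans h, fun hb => hb.trans h.symm⟩, fun h => ?_⟩
  rcases hG.reachable_deleteEdges_or u v a with ha | ha
  · exact ha.symm.trans (h.mp ha)
  · have hvb := (hG.reachable_deleteEdges_or u v b).resolve_left
      fun hub => isBridge_iff.mp hb ((h.mpr hub).trans ha.symm)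
    exact ha.symm.trans hvb

theorem IsTree.isBridge (hT : G.IsTree) (hadj : G.Adj u v) : G.IsBridge s(u, v) :=
  isAcyclic_iff_forall_adj_isBridge.mp hT.isAcyclic hadj

theorem IsTree.onPath_iff (hT : G.IsTree) (a b : V) (e : Sym2 V) :
    OnPath G a b e ↔ ¬ (G.deleteEdges {e}).Reachable a b := by
  constructor
  · rintro ⟨p, hp, he⟩ hr
    induction e using Sym2.ind with
    | _ x y =>
      obtain ⟨q, hq⟩ := reachable_deleteEdges_iff_exists_walk.mp hr
      have := (hT.existsUnique_path a b).unique hp q.toPath.2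
      exact hq (q.edges_toPath_subset_edges (this ▸ he))
  · intro h
    obtain ⟨p, hp⟩ := (hT.connected.preconnected a b).exists_isPath
    exact ⟨p, hp, p.mem_edges_of_not_reachable_deleteEdges h⟩

theorem Walk.exists_mem_support_of_forall_mem_edges {c d c' d' x t : V} (p : G.Walk c d)
    (q : G.Walk c' d') (r : G.Walk x t) (hx : x ∈ p.support) (ht : t ∈ q.support)
    (hr : ∀ e ∈ r.edges, e ∈ p.edges ∨ e ∈ q.edges) : ∃ y ∈ p.support, y ∈ q.support := by
  induction r with
  | nil => exact ⟨_, hx, ht⟩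
  | @cons a b _ hab r ih =>
    rcases hr s(a, b) (by simp) with hp | hq
    · exact ih (p.snd_mem_support_of_mem_edges hp) ht fun e he => hr e (by simp [he])
    · exact ⟨a, hx, q.fst_mem_support_of_mem_edges hq⟩

theorem isQuartet_of_forall_support
    (hdisj : ∀ (p : G.Walk a1 a2) (q : G.Walk a3 a4), p.IsPath → q.IsPath →
      ∀ v ∈ p.support, v ∉ q.support) :
    IsQuartet G a1 a2 a3 a4 := by
  intro p q hp hq e hep heq
  induction e using Sym2.ind with
  | _ x y =>
    exact hdisj p q hp hq x (p.fst_mem_support_of_mem_edges hep)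
      (q.fst_mem_support_of_mem_edges heq)

theorem IsQuartet.reachable_deleteEdges_or (hq : IsQuartet G a1 a2 a3 a4) (hG : G.Connected)
    (e : Sym2 V) :
    (G.deleteEdges {e}).Reachable a1 a2 ∨ (G.deleteEdges {e}).Reachable a3 a4 := by
  by_contra! h
  obtain ⟨p, hp⟩ := (hG.preconnected a1 a2).exists_isPath
  obtain ⟨q, hq'⟩ := (hG.preconnected a3 a4).exists_isPath
  exact hq p q hp hq' e (p.mem_edges_of_not_reachable_deleteEdges h.1)
    (q.mem_edges_of_not_reachable_deleteEdges h.2)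

theorem IsQuartet.reachable_iff_or_reachable_iff (hq : IsQuartet G a1 a2 a3 a4)
    (hT : G.IsTree) (hadj : G.Adj u v) :
    ((G.deleteEdges {s(u, v)}).Reachable u a1 ↔ (G.deleteEdges {s(u, v)}).Reachable u a2) ∨
      ((G.deleteEdges {s(u, v)}).Reachable u a3 ↔ (G.deleteEdges {s(u, v)}).Reachable u a4) := by
  have hiff := hT.connected.reachable_deleteEdges_iff (hT.isBridge hadj)
  exact (hq.reachable_deleteEdges_or hT.connected s(u, v)).imp (hiff a1 a2).mp (hiff a3 a4).mp

end SimpleGraph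

namespace SimpleGraph

variable {V : Type*} [Fintype V] {G : SimpleGraph V} {u v a1 a2 a3 a4 : V}

theorem edgeSet_of_mem_subtreeEdges {R : Finset V} {e : Sym2 V} (he : e ∈ subtreeEdges G R) :
    e ∈ G.edgeSet :=
  mem_edgeFinset.mp (mem_filter.mp he).1

theorem IsTree.mem_subtreeEdges_iff (hT : G.IsTree) (hadj : G.Adj u v) (R : Finset V) :
    s(u, v) ∈ subtreeEdges G R ↔ Separates ((G.deleteEdges {s(u, v)}).Reachable u) R := by
  simp only [subtreeEdges, mem_filter, mem_edgeFinset, mem_edgeSet, hadj, true_and,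
    hT.onPath_iff, separates_iff_exists_not_iff,
    ← hT.connected.reachable_deleteEdges_iff (hT.isBridge hadj)]

theorem IsTree.subtreeEdges_union_subset (hT : G.IsTree) (hq : IsQuartet G a1 a2 a3 a4)
    (Z : Finset V) :
    subtreeEdges G (insert a1 (insert a2 Z)) ∪ subtreeEdges G (insert a3 (insert a4 Z)) ⊆
      subtreeEdges G (insert a1 (insert a3 Z)) ∪ subtreeEdges G (insert a2 (insert a4 Z)) := by
  intro e he
  have hE := (mem_union.mp he).elim edgeSet_of_mem_subtreeEdges edgeSet_of_mem_subtreeEdges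
  induction e using Sym2.ind with
  | _ x y =>
    simp only [mem_union, hT.mem_subtreeEdges_iff hE] at he ⊢
    exact Separates.cross_of_or (hq.reachable_iff_or_reachable_iff hT hE) he

theorem IsTree.subtreeEdges_inter_subset (hT : G.IsTree) (hq : IsQuartet G a1 a2 a3 a4)
    (Z : Finset V) :
    subtreeEdges G (insert a1 (insert a2 Z)) ∩ subtreeEdges G (insert a3 (insert a4 Z)) ⊆
      subtreeEdges G (insert a1 (insert a3 Z)) ∩ subtreeEdges G (insert a2 (insert a4 Z)) := by
  intro e he
  have hE := edgeSet_of_mem_subtreeEdges (mem_inter.mp he).1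
  induction e using Sym2.ind with
  | _ x y =>
    simp only [mem_inter, hT.mem_subtreeEdges_iff hE] at he ⊢
    exact Separates.cross_of_and (hq.reachable_iff_or_reachable_iff hT hE) he

theorem IsTree.subtreeWeight_add_le (hT : G.IsTree) (hq : IsQuartet G a1 a2 a3 a4)
    {w : Sym2 V → ℝ} (hw : ∀ e ∈ G.edgeSet, 0 ≤ w e) (Z : Finset V) :
    subtreeWeight G w (insert a1 (insert a2 Z)) + subtreeWeight G w (insert a3 (insert a4 Z)) ≤
      subtreeWeight G w (insert a1 (insert a3 Z)) +
        subtreeWeight G w (insert a2 (insert a4 Z)) :=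
  sum_add_sum_le_sum_add_sum (hT.subtreeEdges_union_subset hq Z)
    (hT.subtreeEdges_inter_subset hq Z) fun e he =>
      hw e ((mem_union.mp he).elim edgeSet_of_mem_subtreeEdges edgeSet_of_mem_subtreeEdges)

theorem IsTree.subtreeWeight_add_lt (hT : G.IsTree) (hq : IsQuartet G a1 a2 a3 a4)
    {w : Sym2 V → ℝ} (hw : ∀ e ∈ G.edgeSet, 0 < w e) (hadj : G.Adj u v) {Z : Finset V}
    (h12 : (G.deleteEdges {s(u, v)}).Reachable u a1 ↔ (G.deleteEdges {s(u, v)}).Reachable u a2)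
    (h34 : (G.deleteEdges {s(u, v)}).Reachable u a3 ↔ (G.deleteEdges {s(u, v)}).Reachable u a4)
    (h13 : ¬ ((G.deleteEdges {s(u, v)}).Reachable u a1 ↔
      (G.deleteEdges {s(u, v)}).Reachable u a3))
    (hZ : ∀ z ∈ Z, (G.deleteEdges {s(u, v)}).Reachable u z) :
    subtreeWeight G w (insert a1 (insert a2 Z)) + subtreeWeight G w (insert a3 (insert a4 Z)) <
      subtreeWeight G w (insert a1 (insert a3 Z)) +
        subtreeWeight G w (insert a2 (insert a4 Z)) := by
  refine sum_add_sum_lt_sum_add_sum (hT.subtreeEdges_union_subset hq Z)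
    (hT.subtreeEdges_inter_subset hq Z) (fun e he => (hw e ?_).le) ?_ ?_ (hw s(u, v) hadj)
  · exact (mem_union.mp he).elim edgeSet_of_mem_subtreeEdges edgeSet_of_mem_subtreeEdges
  · rw [mem_inter, hT.mem_subtreeEdges_iff hadj, hT.mem_subtreeEdges_iff hadj]
    exact ⟨separates_insert_insert_of_not_iff h13,
      separates_insert_insert_of_not_iff (by tauto)⟩
  · rw [mem_inter, hT.mem_subtreeEdges_iff hadj, hT.mem_subtreeEdges_iff hadj]
    exact not_separates_and_of_forall h12 h34 h13 hZ

theorem IsTree.exists_middle_edge (hT : G.IsTree)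
    (hdisj : ∀ (p : G.Walk a1 a2) (q : G.Walk a3 a4), p.IsPath → q.IsPath →
      ∀ v ∈ p.support, v ∉ q.support) :
    ∃ e ∈ subtreeEdges G {a1, a2, a3, a4}, (G.deleteEdges {e}).Reachable a1 a2 ∧
      (G.deleteEdges {e}).Reachable a3 a4 ∧ ¬ (G.deleteEdges {e}).Reachable a1 a3 := by
  obtain ⟨p12, hp12⟩ := (hT.connected.preconnected a1 a2).exists_isPath
  obtain ⟨p34, hp34⟩ := (hT.connected.preconnected a3 a4).exists_isPath
  obtain ⟨p13, hp13⟩ := (hT.connected.preconnected a1 a3).exists_isPath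
  obtain ⟨e, he13, he12, he34⟩ : ∃ e ∈ p13.edges, e ∉ p12.edges ∧ e ∉ p34.edges := by
    by_contra! h
    obtain ⟨y, hy12, hy34⟩ := p12.exists_mem_support_of_forall_mem_edges p34 p13
      p12.start_mem_support p34.start_mem_support fun e he => or_iff_not_imp_left.mpr (h e he)
    exact hdisj p12 p34 hp12 hp34 y hy12 hy34
  refine ⟨e, mem_filter.mpr ⟨mem_edgeFinset.mpr (p13.edges_subset_edgeSet he13),
    a1, by simp, a3, by simp, p13, hp13, he13⟩, ⟨p12.toDeleteEdge e he12⟩,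
    ⟨p34.toDeleteEdge e he34⟩, (hT.onPath_iff a1 a3 e).mp ⟨p13, hp13, he13⟩⟩

theorem IsTree.card_leafSide_add_card_leafSide (hT : G.IsTree) (hadj : G.Adj u v)
    (X : Finset V) : #(leafSide G X u s(u, v)) + #(leafSide G X v s(u, v)) = #X := by
  have hv (x : V) : (G.deleteEdges {s(u, v)}).Reachable v x ↔
      ¬ (G.deleteEdges {s(u, v)}).Reachable u x := by
    have := isBridge_iff.mp (hT.isBridge hadj)
    rw [hT.connected.reachable_deleteEdges_iff (hT.isBridge hadj) v x]
    tauto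
  rw [leafSide, leafSide, filter_congr fun x _ => hv x]
  exact card_filter_add_card_filter_not _

end SimpleGraph

theorem SDmap_eq_pairSum {V : Type*} [Fintype V] (G : SimpleGraph V) (w : Sym2 V → ℝ)
    (X : Finset V) (m : ℕ) (i j : V) :
    SDmap G w X m i j = pairSum (subtreeWeight G w) X (m - 2) i j :=
  rfl

theorem SD_strict_quartet_inequality_general
    {V : Type*} [Fintype V] (G : SimpleGraph V) (X : Finset V)
    (hT : G.IsTree)
    (w : Sym2 V → ℝ) (hw : ∀ e ∈ G.edgeSet, 0 < w e)
    (m : ℕ) (hmn : m ≤ X.card)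
    (a1 a2 a3 a4 : V) (h1 : a1 ∈ X) (h2 : a2 ∈ X) (h3 : a3 ∈ X) (h4 : a4 ∈ X)
    (h12 : a1 ≠ a2) (h13 : a1 ≠ a3) (h14 : a1 ≠ a4)
    (h23 : a2 ≠ a3) (h24 : a2 ≠ a4) (h34 : a3 ≠ a4)
    -- the path from `a1` to `a2` and the path from `a3` to `a4` are vertex-disjoint
    (hdisj : ∀ (p : G.Walk a1 a2) (q : G.Walk a3 a4), p.IsPath → q.IsPath →
      ∀ v ∈ p.support, v ∉ q.support)
    -- every edge of the subtree spanning `{a1,a2,a3,a4}` lies in `T_{≤ n-m}`: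
    -- its removal leaves a component with at most `n - m` leaves
    (hsmall : ∀ e ∈ subtreeEdges G {a1, a2, a3, a4},
      ∃ v, v ∈ e ∧ (leafSide G X v e).card ≤ X.card - m) :
    SDmap G w X m a1 a2 + SDmap G w X m a3 a4 <
      SDmap G w X m a1 a3 + SDmap G w X m a2 a4 := by
  have hq := isQuartet_of_forall_support hdisj
  obtain ⟨e, he, hr12, hr34, hr13⟩ := hT.exists_middle_edge hdisj
  obtain ⟨c, hc, hc_small⟩ := hsmall e he
  obtain ⟨b, rfl⟩ := Sym2.mem_iff_exists.mp hc
  have hadj : G.Adj b c := (edgeSet_of_mem_subtreeEdges he).symm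
  rw [Sym2.eq_swap] at hr12 hr34 hr13 hc_small
  have hb_big : m ≤ #(leafSide G X b s(b, c)) := by
    have := hT.card_leafSide_add_card_leafSide hadj X
    omega
  have hiff := hT.connected.reachable_deleteEdges_iff (hT.isBridge hadj)
  rw [hiff] at hr12 hr34 hr13
  obtain ⟨Z, hZ, hZb⟩ := exists_mem_powersetCard_sdiff_forall hb_big hr12 hr34 hr13
  simp only [SDmap_eq_pairSum]
  rw [← sub_pos, ← sub_sub, pairSum_quartet _ h1 h2 h3 h4 h12 h13 h14 h23 h24 h34]
  refine sum_pos' (fun Z _ => ?_) ⟨Z, hZ, ?_⟩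
  · linarith [hT.subtreeWeight_add_le hq (fun e he => (hw e he).le) Z]
  · linarith [hT.subtreeWeight_add_lt hq hw hadj hr12 hr34 hr13 hZb]

/-- for a quartet whose spanning subtree lies in `T_{≤ n-m}`,
the `S_D`-four-point inequality is strict:
`S_D(a1,a2) + S_D(a3,a4) < S_D(a1,a3) + S_D(a2,a4)`. -/
theorem SD_strict_quartet_inequality
    {V : Type*} [Fintype V] (G : SimpleGraph V) (X : Finset V)
    (hT : G.IsTree)
    (hleaf : ∀ v : V, G.degree v = 1 ↔ v ∈ X)
    (hint : ∀ v : V, v ∉ X → 3 ≤ G.degree v)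
    (w : Sym2 V → ℝ) (hw : ∀ e ∈ G.edgeSet, 0 < w e)
    (m : ℕ) (hm : 2 ≤ m) (hmn : m ≤ X.card)
    (a1 a2 a3 a4 : V) (h1 : a1 ∈ X) (h2 : a2 ∈ X) (h3 : a3 ∈ X) (h4 : a4 ∈ X)
    (h12 : a1 ≠ a2) (h13 : a1 ≠ a3) (h14 : a1 ≠ a4)
    (h23 : a2 ≠ a3) (h24 : a2 ≠ a4) (h34 : a3 ≠ a4)
    -- the path from `a1` to `a2` and the path from `a3` to `a4` are vertex-disjoint
    (hdisj : ∀ (p : G.Walk a1 a2) (q : G.Walk a3 a4), p.IsPath → q.IsPath →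
      ∀ v ∈ p.support, v ∉ q.support)
    -- every edge of the subtree spanning `{a1,a2,a3,a4}` lies in `T_{≤ n-m}`:
    -- its removal leaves a component with at most `n - m` leaves
    (hsmall : ∀ e ∈ subtreeEdges G {a1, a2, a3, a4},
      ∃ v, v ∈ e ∧ (leafSide G X v e).card ≤ X.card - m) :
    SDmap G w X m a1 a2 + SDmap G w X m a3 a4 <
      SDmap G w X m a1 a3 + SDmap G w X m a2 a4 :=
  SD_strict_quartet_inequality_general G X hT w hw m hmn a1 a2 a3 a4 h1 h2 h3 h4 h12 h13 h14 h23 h24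
    h34 hdisj hsmall
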